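/- Lower bound on system coherence from witness and correlations: for a bipartite state ρ_SE = ρ_S ⊗ ρ_E + χ_SE on ℂ^d ⊗ ℂ^m (with ρ_S, ρ_E the marginals), any joint unitary U and measurement 0 ⪯ M ⪯ I on the system, the witness W = tr((M⊗I)·U[ρ_SE − (Γ⊗id)ρ_SE]U†) satisfies ‖ρ_S − Γ(ρ_S)‖_tr ≥ 2|W| − 2‖χ_SE‖_tr. -/

import Mathlib

open Matrix BigOperators
open scoped Kronecker Matrix.Norms.L2Operator ComplexOrder

/-- Complete dephasing (classicalisation) map in the standard basis of `ℂ^d`. -/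
noncomputable def dephase {d : ℕ} (ρ : Matrix (Fin d) (Fin d) ℂ) : Matrix (Fin d) (Fin d) ℂ :=
  Matrix.of fun i j => if i = j then ρ i j else 0

/-- Trace norm: sum of singular values, i.e. `tr √(AᴴA)`. -/
noncomputable def traceNorm {n : Type} [Fintype n] [DecidableEq n] (A : Matrix n n ℂ) : ℝ :=
  (((Matrix.posSemidef_conjTranspose_mul_self A).1.eigenvectorUnitary.1 *
      diagonal (((↑) : ℝ → ℂ) ∘ (Real.sqrt ∘ (Matrix.posSemidef_conjTranspose_mul_self A).1.eigenvalues)) *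
      (star (Matrix.posSemidef_conjTranspose_mul_self A).1.eigenvectorUnitary : Matrix n n ℂ)).trace).re

/-- Dephasing on the first (system) factor of a bipartite space. -/
noncomputable def dephaseS {d m : ℕ} (ρ : Matrix (Fin d × Fin m) (Fin d × Fin m) ℂ) :
    Matrix (Fin d × Fin m) (Fin d × Fin m) ℂ :=
  Matrix.of fun p q => if p.1 = q.1 then ρ p q else 0

/-- Partial trace over the environment (second factor). -/
noncomputable def ptraceE {d m : ℕ} (ρ : Matrix (Fin d × Fin m) (Fin d × Fin m) ℂ) :
    Matrix (Fin d) (Fin d) ℂ :=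
  Matrix.of fun i j => ∑ α, ρ (i, α) (j, α)

/-- Partial trace over the system (first factor). -/
noncomputable def ptraceS {d m : ℕ} (ρ : Matrix (Fin d × Fin m) (Fin d × Fin m) ℂ) :
    Matrix (Fin m) (Fin m) ℂ :=
  Matrix.of fun α β => ∑ i, ρ (i, α) (i, β)

variable {n : Type} [Fintype n] [DecidableEq n]

set_option linter.unusedSectionVars false
set_option linter.unusedVariables false

section SqrtCompat
open scoped MatrixOrder

noncomputable def Matrix.PosSemidef.sqrt {A : Matrix n n ℂ} (hA : A.PosSemidef) : Matrix n n ℂ :=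
  hA.1.eigenvectorUnitary.1 * diagonal (((↑) : ℝ → ℂ) ∘ (Real.sqrt ∘ hA.1.eigenvalues)) *
    (star hA.1.eigenvectorUnitary : Matrix n n ℂ)

lemma Matrix.PosSemidef.sqrt_eq_cfc' {A : Matrix n n ℂ} (hA : A.PosSemidef) :
    hA.sqrt = CFC.sqrt A := by
  rw [CFC.sqrt_eq_cfc, cfc_nnreal_eq_real _ A hA.nonneg, hA.1.cfc_eq]
  simp only [Matrix.PosSemidef.sqrt, IsHermitian.cfc, Unitary.conjStarAlgAut_apply]
  congr 3
  funext x
  simp only [Function.comp_apply, Real.sqrt.eq_1]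
  rfl

lemma Matrix.PosSemidef.posSemidef_sqrt {A : Matrix n n ℂ} (hA : A.PosSemidef) :
    hA.sqrt.PosSemidef := by
  rw [hA.sqrt_eq_cfc']
  exact (CFC.sqrt_nonneg A).posSemidef

lemma Matrix.PosSemidef.sqrt_mul_self {A : Matrix n n ℂ} (hA : A.PosSemidef) :
    hA.sqrt * hA.sqrt = A := by
  rw [hA.sqrt_eq_cfc']
  exact CFC.sqrt_mul_sqrt_self A hA.nonneg

lemma Matrix.PosSemidef.eq_sqrt_of_sq_eq {B : Matrix n n ℂ} (hB : B.PosSemidef)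
    (A : Matrix n n ℂ) (h : B ^ 2 = A) (hA : A.PosSemidef) : B = hA.sqrt := by
  rw [hA.sqrt_eq_cfc', eq_comm]
  exact CFC.sqrt_unique (by rw [← h, pow_two]) hB.nonneg

end SqrtCompat

-- traceNorm via any psd square root
lemma traceNorm_eq_of_sq {A S : Matrix n n ℂ} (hS : S.PosSemidef) (h : S ^ 2 = Aᴴ * A) :
    traceNorm A = S.trace.re := by
  rw [show traceNorm A = ((Matrix.posSemidef_conjTranspose_mul_self A).sqrt.trace).re from rfl,
    ← hS.eq_sqrt_of_sq_eq _ h]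

lemma kron_conjTranspose {m : Type} [Fintype m] (A : Matrix n n ℂ) (B : Matrix m m ℂ) :
    (A ⊗ₖ B)ᴴ = Aᴴ ⊗ₖ Bᴴ := by
  ext p q
  simp [Matrix.conjTranspose_apply, Matrix.kroneckerMap_apply, mul_comm]

lemma kron_posSemidef {m : Type} [Fintype m] [DecidableEq m] {A : Matrix n n ℂ}
    {B : Matrix m m ℂ} (hA : A.PosSemidef) (hB : B.PosSemidef) : (A ⊗ₖ B).PosSemidef := by
  have h : A ⊗ₖ B = (hA.sqrt ⊗ₖ hB.sqrt)ᴴ * (hA.sqrt ⊗ₖ hB.sqrt) := by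
    rw [kron_conjTranspose, hA.posSemidef_sqrt.1, hB.posSemidef_sqrt.1,
      ← Matrix.mul_kronecker_mul, hA.sqrt_mul_self, hB.sqrt_mul_self]
  rw [h]
  exact Matrix.posSemidef_conjTranspose_mul_self _

lemma trace_unitary_conj {V A : Matrix n n ℂ} (hV : V ∈ Matrix.unitaryGroup n ℂ) :
    (V * A * Vᴴ).trace = A.trace := by
  rw [Matrix.trace_mul_cycle, ← Matrix.star_eq_conjTranspose,
    (Matrix.mem_unitaryGroup_iff'.mp hV : star V * V = 1)]
  simp

lemma posSemidef_unitary_conj {V A : Matrix n n ℂ} (hV : V ∈ Matrix.unitaryGroup n ℂ)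
    (hA : A.PosSemidef) : (V * A * Vᴴ).PosSemidef :=
  hA.mul_mul_conjTranspose_same V

lemma traceNorm_unitary_conj {V A : Matrix n n ℂ} (hV : V ∈ Matrix.unitaryGroup n ℂ) :
    traceNorm (V * A * Vᴴ) = traceNorm A := by
  have hS := (Matrix.posSemidef_conjTranspose_mul_self A)
  have h1 : (V * hS.sqrt * Vᴴ) ^ 2 = (V * A * Vᴴ)ᴴ * (V * A * Vᴴ) := by
    have hVV : Vᴴ * V = 1 := Matrix.mem_unitaryGroup_iff'.mp hV
    have hVV' : ∀ X : Matrix n n ℂ, Vᴴ * (V * X) = X := fun X => by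
      rw [← Matrix.mul_assoc, hVV, Matrix.one_mul]
    simp only [pow_two, Matrix.conjTranspose_mul, Matrix.conjTranspose_conjTranspose,
      Matrix.mul_assoc, hVV']
    congr 1
    rw [← Matrix.mul_assoc, ← Matrix.mul_assoc, hS.sqrt_mul_self]
  rw [traceNorm_eq_of_sq (posSemidef_unitary_conj hV hS.posSemidef_sqrt) h1,
    trace_unitary_conj hV, traceNorm]
  rfl

lemma unitary_conj_mul {V : Matrix n n ℂ} (hV : V ∈ Matrix.unitaryGroup n ℂ)
    (B C : Matrix n n ℂ) : (V * B * Vᴴ) * (V * C * Vᴴ) = V * (B * C) * Vᴴ := by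
  have hVV : Vᴴ * V = 1 := Matrix.mem_unitaryGroup_iff'.mp hV
  have hVV' : ∀ X : Matrix n n ℂ, Vᴴ * (V * X) = X := fun X => by
    rw [← Matrix.mul_assoc, hVV, Matrix.one_mul]
  simp only [Matrix.mul_assoc, hVV']

lemma posSemidef_diag_re_nonneg {R : Matrix n n ℂ} (hR : R.PosSemidef) (i : n) :
    0 ≤ (R i i).re ∧ (R i i).im = 0 := by
  have h := hR.diag_nonneg (i := i)
  rw [Complex.le_def] at h
  exact ⟨h.1, h.2.symm⟩

lemma traceNorm_hermitian {A : Matrix n n ℂ} (hA : A.IsHermitian) :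
    traceNorm A = ∑ i, |hA.eigenvalues i| := by
  set V : Matrix n n ℂ := (hA.eigenvectorUnitary : Matrix n n ℂ) with hVdef
  have hV : V ∈ Matrix.unitaryGroup n ℂ := hA.eigenvectorUnitary.2
  have hspec : A = V * Matrix.diagonal (fun i => (hA.eigenvalues i : ℂ)) * Vᴴ := by
    simpa [Matrix.star_eq_conjTranspose, Function.comp_def] using hA.spectral_theorem
  set S : Matrix n n ℂ := V * Matrix.diagonal (fun i => ((|hA.eigenvalues i| : ℝ) : ℂ)) * Vᴴ
    with hSdef
  have hdpsd : (Matrix.diagonal (fun i => ((|hA.eigenvalues i| : ℝ) : ℂ))).PosSemidef :=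
    Matrix.posSemidef_diagonal_iff.mpr fun i => Complex.zero_le_real.mpr (abs_nonneg _)
  have hS : S.PosSemidef := hdpsd.mul_mul_conjTranspose_same V
  have hsq : S ^ 2 = Aᴴ * A := by
    have hAA : (V * Matrix.diagonal (fun i => (hA.eigenvalues i : ℂ)) * Vᴴ) *
        (V * Matrix.diagonal (fun i => (hA.eigenvalues i : ℂ)) * Vᴴ) = A * A := by
      rw [← hspec]
    rw [hA.eq, ← hAA, pow_two, hSdef, unitary_conj_mul hV, unitary_conj_mul hV,
      Matrix.diagonal_mul_diagonal, Matrix.diagonal_mul_diagonal]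
    have habs : (fun i => ((|hA.eigenvalues i| : ℝ) : ℂ) * ((|hA.eigenvalues i| : ℝ) : ℂ)) =
        fun i => ((hA.eigenvalues i : ℂ) * (hA.eigenvalues i : ℂ)) := by
      funext i
      rw [← Complex.ofReal_mul, ← Complex.ofReal_mul, abs_mul_abs_self]
    rw [habs]
  rw [traceNorm_eq_of_sq hS hsq, hSdef, trace_unitary_conj hV, Matrix.trace_diagonal]
  rw [Complex.re_sum]
  simp

lemma trace_mul_le_traceNorm {A P : Matrix n n ℂ} (hA : A.IsHermitian) (htr : A.trace = 0)
    (hP : P.PosSemidef) (hP1 : (1 - P).PosSemidef) :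
    2 * |((P * A).trace).re| ≤ traceNorm A := by
  set V : Matrix n n ℂ := (hA.eigenvectorUnitary : Matrix n n ℂ) with hVdef
  have hV : V ∈ Matrix.unitaryGroup n ℂ := hA.eigenvectorUnitary.2
  have hVV : Vᴴ * V = 1 := Matrix.mem_unitaryGroup_iff'.mp hV
  have hspec : A = V * Matrix.diagonal (fun i => (hA.eigenvalues i : ℂ)) * Vᴴ := by
    simpa [Matrix.star_eq_conjTranspose, Function.comp_def] using hA.spectral_theorem
  set Q : Matrix n n ℂ := Vᴴ * P * V with hQdef
  have hQ : Q.PosSemidef := hP.conjTranspose_mul_mul_same V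
  have hQ1 : (1 - Q).PosSemidef := by
    have h : (1 : Matrix n n ℂ) - Q = Vᴴ * (1 - P) * V := by
      rw [Matrix.mul_sub, Matrix.sub_mul, Matrix.mul_one, hVV, hQdef]
    rw [h]
    exact hP1.conjTranspose_mul_mul_same V
  set lam : n → ℝ := hA.eigenvalues with hlam
  -- trace identity
  have hPA : (P * A).trace = ∑ i, Q i i * (lam i : ℂ) := by
    conv_lhs => rw [hspec]
    rw [← Matrix.mul_assoc, ← Matrix.mul_assoc, Matrix.trace_mul_cycle,
      ← Matrix.mul_assoc Vᴴ P V, ← hQdef]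
    simp [Matrix.trace, Matrix.diag, Matrix.mul_diagonal]
  -- eigenvalue sum is zero
  have hsum0 : ∑ i, lam i = 0 := by
    have h : A.trace = ∑ i, (lam i : ℂ) := by
      conv_lhs => rw [hspec]
      rw [trace_unitary_conj hV, Matrix.trace_diagonal]
    rw [htr] at h
    have : ((∑ i, lam i : ℝ) : ℂ) = 0 := by push_cast; rw [← h]
    exact_mod_cast this
  set c : n → ℝ := fun i => (Q i i).re with hc
  have hc0 : ∀ i, 0 ≤ c i := fun i => (posSemidef_diag_re_nonneg hQ i).1
  have hc1 : ∀ i, c i ≤ 1 := by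
    intro i
    have h := (posSemidef_diag_re_nonneg hQ1 i).1
    have h1 : ((1 : Matrix n n ℂ) - Q) i i = 1 - Q i i := by
      simp [Matrix.sub_apply, Matrix.one_apply]
    rw [h1] at h
    simp only [Complex.sub_re, Complex.one_re] at h
    linarith
  have hre : ((P * A).trace).re = ∑ i, c i * lam i := by
    rw [hPA, Complex.re_sum]
    congr 1; funext i
    simp [Complex.mul_re, hc]
  rw [hre, traceNorm_hermitian hA]
  have hshift : ∑ i, c i * lam i = ∑ i, (c i - 1/2) * lam i := by
    simp only [sub_mul, Finset.sum_sub_distrib]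
    rw [← Finset.mul_sum]
    simp [hsum0]
  rw [hshift]
  calc 2 * |∑ i, (c i - 1/2) * lam i| ≤ 2 * ∑ i, |(c i - 1/2) * lam i| := by
        have := Finset.abs_sum_le_sum_abs (fun i => (c i - 1/2) * lam i) Finset.univ
        linarith
    _ ≤ 2 * ∑ i, (1/2) * |lam i| := by
        have h : ∀ i ∈ Finset.univ, |(c i - 1/2) * lam i| ≤ (1/2) * |lam i| := by
          intro i _
          rw [abs_mul]
          have : |c i - 1/2| ≤ 1/2 := abs_le.mpr ⟨by linarith [hc0 i], by linarith [hc1 i]⟩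
          exact mul_le_mul_of_nonneg_right this (abs_nonneg _)
        have := Finset.sum_le_sum h
        linarith
    _ = ∑ i, |lam i| := by rw [← Finset.mul_sum]; ring

lemma traceNorm_kron_state {m' : Type} [Fintype m'] [DecidableEq m'] (A : Matrix n n ℂ)
    {σ : Matrix m' m' ℂ} (hσ : σ.PosSemidef) (hσtr : σ.trace = 1) :
    traceNorm (A ⊗ₖ σ) = traceNorm A := by
  have hS := Matrix.posSemidef_conjTranspose_mul_self A
  have hK : (hS.sqrt ⊗ₖ σ).PosSemidef := kron_posSemidef hS.posSemidef_sqrt hσ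
  have hsq : (hS.sqrt ⊗ₖ σ) ^ 2 = (A ⊗ₖ σ)ᴴ * (A ⊗ₖ σ) := by
    rw [pow_two, ← Matrix.mul_kronecker_mul, hS.sqrt_mul_self, kron_conjTranspose,
      ← Matrix.mul_kronecker_mul, hσ.1.eq]
  rw [traceNorm_eq_of_sq hK hsq, Matrix.trace_kronecker, hσtr, mul_one, traceNorm]
  rfl

lemma posSemidef_sum {ι : Type} (s : Finset ι) (f : ι → Matrix n n ℂ)
    (h : ∀ i ∈ s, (f i).PosSemidef) : (∑ i ∈ s, f i).PosSemidef := by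
  classical
  induction s using Finset.induction_on with
  | empty => simpa using Matrix.PosSemidef.zero
  | @insert a s hni ih =>
    rw [Finset.sum_insert hni]
    exact (h _ (Finset.mem_insert_self _ _)).add
      (ih fun i hi => h i (Finset.mem_insert_of_mem hi))

lemma herm_trace_abs {A B : Matrix n n ℂ} (hA : A.IsHermitian) (hB : B.IsHermitian) :
    ‖(A * B).trace‖ = |((A * B).trace).re| := by
  have h : (starRingEnd ℂ) ((A * B).trace) = (A * B).trace := by
    have : ((A * B)ᴴ).trace = star ((A * B).trace) := Matrix.trace_conjTranspose _
    rw [Matrix.conjTranspose_mul, hA.eq, hB.eq, Matrix.trace_mul_comm] at this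
    exact this.symm
  have him : ((A * B).trace).im = 0 := by
    have := congrArg Complex.im h
    simp [Complex.conj_im] at this
    linarith
  exact (Complex.abs_re_eq_norm.mpr him).symm

lemma conj_isHermitian {V A : Matrix n n ℂ} (hA : A.IsHermitian) :
    (V * A * Vᴴ).IsHermitian := by
  unfold Matrix.IsHermitian
  simp only [Matrix.conjTranspose_mul, Matrix.conjTranspose_conjTranspose, hA.eq,
    Matrix.mul_assoc]


section Bipartite
variable {d m : ℕ} (ρ : Matrix (Fin d × Fin m) (Fin d × Fin m) ℂ)

lemma dephaseS_rep : dephaseS ρ = ∑ k : Fin d,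
    Matrix.diagonal (fun p : Fin d × Fin m => if p.1 = k then (1 : ℂ) else 0) * ρ *
    Matrix.diagonal (fun p : Fin d × Fin m => if p.1 = k then (1 : ℂ) else 0) := by
  ext p q
  simp only [dephaseS, Matrix.of_apply, Matrix.sum_apply, Matrix.diagonal_mul,
    Matrix.mul_diagonal]
  by_cases h : p.1 = q.1
  · rw [h]
    rw [Finset.sum_eq_single q.1]
    · simp
    · intro k _ hk
      simp [Ne.symm hk]
    · simp
  · rw [Finset.sum_eq_zero]
    · simp [h]
    · intro k _
      by_cases hp : p.1 = k
      · by_cases hq : q.1 = k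
        · exact absurd (hp.trans hq.symm) h
        · simp [hq]
      · simp [hp]

lemma dephaseS_posSemidef {ρ : Matrix (Fin d × Fin m) (Fin d × Fin m) ℂ} (hρ : ρ.PosSemidef) :
    (dephaseS ρ).PosSemidef := by
  rw [dephaseS_rep]
  refine posSemidef_sum _ _ fun k _ => ?_
  have hD : (Matrix.diagonal (fun p : Fin d × Fin m => if p.1 = k then (1 : ℂ) else 0))ᴴ =
      Matrix.diagonal (fun p : Fin d × Fin m => if p.1 = k then (1 : ℂ) else 0) := by
    ext p q
    simp only [Matrix.conjTranspose_apply, Matrix.diagonal_apply, apply_ite (star : ℂ → ℂ),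
      star_one, star_zero]
    by_cases h : p = q
    · subst h; simp
    · simp [h, Ne.symm h]
  nth_rewrite 2 [← hD]
  exact hρ.mul_mul_conjTranspose_same _

lemma ptraceE_rep : ptraceE ρ = ∑ α : Fin m,
    (Matrix.of fun (i : Fin d) (p : Fin d × Fin m) => if p = (i, α) then (1 : ℂ) else 0) * ρ *
    (Matrix.of fun (i : Fin d) (p : Fin d × Fin m) => if p = (i, α) then (1 : ℂ) else 0)ᴴ := by
  ext i j
  simp only [ptraceE, Matrix.of_apply, Matrix.sum_apply, Matrix.mul_apply,
    Matrix.conjTranspose_apply, Matrix.of_apply]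
  congr 1
  funext α
  symm
  rw [Finset.sum_eq_single ((j, α) : Fin d × Fin m)]
  · rw [Finset.sum_eq_single ((i, α) : Fin d × Fin m)]
    · simp
    · intro p _ hp
      simp [hp]
    · simp
  · intro p _ hp
    simp [hp]
  · simp

lemma ptraceE_posSemidef {ρ : Matrix (Fin d × Fin m) (Fin d × Fin m) ℂ} (hρ : ρ.PosSemidef) :
    (ptraceE ρ).PosSemidef := by
  rw [ptraceE_rep]
  exact posSemidef_sum _ _ fun α _ => hρ.mul_mul_conjTranspose_same _

lemma ptraceS_rep : ptraceS ρ = ∑ i : Fin d,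
    (Matrix.of fun (α : Fin m) (p : Fin d × Fin m) => if p = (i, α) then (1 : ℂ) else 0) * ρ *
    (Matrix.of fun (α : Fin m) (p : Fin d × Fin m) => if p = (i, α) then (1 : ℂ) else 0)ᴴ := by
  ext α β
  simp only [ptraceS, Matrix.of_apply, Matrix.sum_apply, Matrix.mul_apply,
    Matrix.conjTranspose_apply, Matrix.of_apply]
  congr 1
  funext i
  symm
  rw [Finset.sum_eq_single ((i, β) : Fin d × Fin m)]
  · rw [Finset.sum_eq_single ((i, α) : Fin d × Fin m)]
    · simp
    · intro p _ hp
      simp [hp]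
    · simp
  · intro p _ hp
    simp [hp]
  · simp

lemma ptraceS_posSemidef {ρ : Matrix (Fin d × Fin m) (Fin d × Fin m) ℂ} (hρ : ρ.PosSemidef) :
    (ptraceS ρ).PosSemidef := by
  rw [ptraceS_rep]
  exact posSemidef_sum _ _ fun i _ => hρ.mul_mul_conjTranspose_same _

end Bipartite

section Bipartite2
variable {d m : ℕ}

lemma dephase_isHermitian {A : Matrix (Fin d) (Fin d) ℂ} (hA : A.IsHermitian) :
    (dephase A).IsHermitian := by
  ext i j
  simp only [Matrix.conjTranspose_apply, dephase, Matrix.of_apply, apply_ite (star : ℂ → ℂ),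
    star_zero]
  by_cases h : i = j
  · subst h; simp [hA.apply]
  · simp [h, Ne.symm h]

lemma dephase_trace (A : Matrix (Fin d) (Fin d) ℂ) : (dephase A).trace = A.trace := by
  simp [dephase, Matrix.trace, Matrix.diag]

lemma dephaseS_sub (A B : Matrix (Fin d × Fin m) (Fin d × Fin m) ℂ) :
    dephaseS (A - B) = dephaseS A - dephaseS B := by
  ext p q
  simp only [dephaseS, Matrix.of_apply, Matrix.sub_apply]
  by_cases h : p.1 = q.1 <;> simp [h]

lemma dephaseS_one : dephaseS (1 : Matrix (Fin d × Fin m) (Fin d × Fin m) ℂ) = 1 := by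
  ext p q
  simp only [dephaseS, Matrix.of_apply, Matrix.one_apply]
  by_cases h : p = q
  · subst h; simp
  · by_cases h1 : p.1 = q.1 <;> simp [h, h1]

lemma dephaseS_kron (A : Matrix (Fin d) (Fin d) ℂ) (B : Matrix (Fin m) (Fin m) ℂ) :
    dephaseS (A ⊗ₖ B) = dephase A ⊗ₖ B := by
  ext p q
  simp only [dephaseS, dephase, Matrix.of_apply, Matrix.kroneckerMap_apply]
  by_cases h : p.1 = q.1 <;> simp [h]

lemma kron_isHermitian {n' m' : Type} [Fintype n'] [Fintype m'] [DecidableEq n'] [DecidableEq m']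
    {A : Matrix n' n' ℂ} {B : Matrix m' m' ℂ} (hA : A.IsHermitian) (hB : B.IsHermitian) :
    (A ⊗ₖ B).IsHermitian := by
  unfold Matrix.IsHermitian
  rw [kron_conjTranspose, hA.eq, hB.eq]

lemma ptraceE_trace (ρ : Matrix (Fin d × Fin m) (Fin d × Fin m) ℂ) :
    (ptraceE ρ).trace = ρ.trace := by
  simp [ptraceE, Matrix.trace, Matrix.diag, Fintype.sum_prod_type]

lemma ptraceS_trace (ρ : Matrix (Fin d × Fin m) (Fin d × Fin m) ℂ) :
    (ptraceS ρ).trace = ρ.trace := by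
  simp only [ptraceS, Matrix.trace, Matrix.diag, Matrix.of_apply, Fintype.sum_prod_type]
  exact Finset.sum_comm

lemma dephaseS_trace_adjoint (B C : Matrix (Fin d × Fin m) (Fin d × Fin m) ℂ) :
    ((dephaseS B) * C).trace = (B * dephaseS C).trace := by
  simp only [Matrix.trace, Matrix.diag, Matrix.mul_apply, dephaseS, Matrix.of_apply,
    ite_mul, mul_ite, zero_mul, mul_zero]
  refine Finset.sum_congr rfl fun p _ => Finset.sum_congr rfl fun q _ => ?_
  by_cases h : p.1 = q.1
  · simp [h]
  · have h' : ¬ q.1 = p.1 := fun hh => h hh.symm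
    simp [h, h']

end Bipartite2


theorem coherence_lower_bound_from_witness {d m : ℕ}
    (ρSE : Matrix (Fin d × Fin m) (Fin d × Fin m) ℂ)
    (hρ : ρSE.PosSemidef) (htr : ρSE.trace = 1)
    (U : Matrix (Fin d × Fin m) (Fin d × Fin m) ℂ)
    (hU : U ∈ Matrix.unitaryGroup (Fin d × Fin m) ℂ)
    (M : Matrix (Fin d) (Fin d) ℂ) (hM0 : M.PosSemidef) (hM1 : (1 - M).PosSemidef) :
    traceNorm (ptraceE ρSE - dephase (ptraceE ρSE)) ≥
      2 * norm (((M ⊗ₖ (1 : Matrix (Fin m) (Fin m) ℂ)) *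
          (U * (ρSE - dephaseS ρSE) * Uᴴ)).trace) -
      2 * traceNorm (ρSE - ptraceE ρSE ⊗ₖ ptraceS ρSE) := by
  set ρS := ptraceE ρSE with hρSdef
  set ρE := ptraceS ρSE with hρEdef
  set χ : Matrix (Fin d × Fin m) (Fin d × Fin m) ℂ := ρSE - ρS ⊗ₖ ρE with hχdef
  set A : Matrix (Fin d) (Fin d) ℂ := ρS - dephase ρS with hAdef
  set P : Matrix (Fin d × Fin m) (Fin d × Fin m) ℂ := M ⊗ₖ (1 : Matrix (Fin m) (Fin m) ℂ)
    with hPdef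
  have hρS : ρS.PosSemidef := ptraceE_posSemidef hρ
  have hρE : ρE.PosSemidef := ptraceS_posSemidef hρ
  have hρStr : ρS.trace = 1 := by rw [hρSdef, ptraceE_trace, htr]
  have hρEtr : ρE.trace = 1 := by rw [hρEdef, ptraceS_trace, htr]
  have hχH : χ.IsHermitian := hρ.1.sub (kron_isHermitian hρS.1 hρE.1)
  have hχtr : χ.trace = 0 := by
    rw [hχdef, Matrix.trace_sub, Matrix.trace_kronecker, htr, hρStr, hρEtr]
    ring
  have hAH : A.IsHermitian := hρS.1.sub (dephase_isHermitian hρS.1)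
  have hAtr : A.trace = 0 := by rw [hAdef, Matrix.trace_sub, dephase_trace, sub_self]
  have hone : (1 : Matrix (Fin m) (Fin m) ℂ).PosSemidef := by
    rw [← Matrix.diagonal_one]
    exact Matrix.posSemidef_diagonal_iff.mpr fun i => zero_le_one
  have hP : P.PosSemidef := kron_posSemidef hM0 hone
  have hP1 : (1 - P).PosSemidef := by
    have h : (1 : Matrix (Fin d × Fin m) (Fin d × Fin m) ℂ) - P
        = (1 - M) ⊗ₖ (1 : Matrix (Fin m) (Fin m) ℂ) := by
      ext p q
      simp only [Matrix.kroneckerMap_apply, Matrix.sub_apply, Matrix.one_apply, hPdef,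
        Prod.mk.injEq, sub_mul]
      by_cases h1 : p.1 = q.1 <;> by_cases h2 : p.2 = q.2 <;>
        simp [h1, h2, Prod.ext_iff, sub_mul]
    rw [h]
    exact kron_posSemidef hM1 hone
  have hUstar : Uᴴ * U = 1 := Matrix.mem_unitaryGroup_iff'.mp hU
  -- decomposition
  have hdec : ρSE - dephaseS ρSE = A ⊗ₖ ρE + χ - dephaseS χ := by
    have h1 : dephaseS χ = dephaseS ρSE - dephase ρS ⊗ₖ ρE := by
      rw [hχdef, dephaseS_sub, dephaseS_kron]
    have h2 : A ⊗ₖ ρE = ρS ⊗ₖ ρE - dephase ρS ⊗ₖ ρE := by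
      ext p q
      simp [hAdef, Matrix.kroneckerMap_apply, Matrix.sub_apply, sub_mul]
    rw [h1, h2, hχdef]
    abel
  set X1 : Matrix (Fin d × Fin m) (Fin d × Fin m) ℂ := U * (A ⊗ₖ ρE) * Uᴴ with hX1def
  set X2 : Matrix (Fin d × Fin m) (Fin d × Fin m) ℂ := U * χ * Uᴴ with hX2def
  have hsplit : (P * (U * (ρSE - dephaseS ρSE) * Uᴴ)).trace
      = (P * X1).trace + (P * X2).trace - (P * (U * dephaseS χ * Uᴴ)).trace := by
    rw [hdec]
    simp only [Matrix.mul_add, Matrix.add_mul, Matrix.mul_sub, Matrix.sub_mul,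
      Matrix.trace_add, Matrix.trace_sub, hX1def, hX2def]
  -- bound 1
  have hX1H : X1.IsHermitian := conj_isHermitian (kron_isHermitian hAH hρE.1)
  have hX1tr : X1.trace = 0 := by
    rw [hX1def, trace_unitary_conj hU, Matrix.trace_kronecker, hAtr, zero_mul]
  have hb1 : 2 * |((P * X1).trace).re| ≤ traceNorm A := by
    have h := trace_mul_le_traceNorm hX1H hX1tr hP hP1
    rwa [hX1def, traceNorm_unitary_conj hU, traceNorm_kron_state _ hρE hρEtr] at h
  -- bound 2
  have hX2H : X2.IsHermitian := conj_isHermitian hχH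
  have hX2tr : X2.trace = 0 := by rw [hX2def, trace_unitary_conj hU, hχtr]
  have hb2 : 2 * |((P * X2).trace).re| ≤ traceNorm χ := by
    have h := trace_mul_le_traceNorm hX2H hX2tr hP hP1
    rwa [hX2def, traceNorm_unitary_conj hU] at h
  -- bound 3
  set Q : Matrix (Fin d × Fin m) (Fin d × Fin m) ℂ := dephaseS (Uᴴ * P * U) with hQdef
  have hT3 : (P * (U * dephaseS χ * Uᴴ)).trace = (Q * χ).trace := by
    rw [← Matrix.mul_assoc, ← Matrix.mul_assoc, Matrix.trace_mul_cycle,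
      ← dephaseS_trace_adjoint, ← Matrix.mul_assoc Uᴴ P U, ← hQdef]
  have hQps : Q.PosSemidef := dephaseS_posSemidef (hP.conjTranspose_mul_mul_same U)
  have hQ1 : (1 - Q).PosSemidef := by
    have h : (1 : Matrix (Fin d × Fin m) (Fin d × Fin m) ℂ) - Q
        = dephaseS (Uᴴ * (1 - P) * U) := by
      rw [Matrix.mul_sub, Matrix.sub_mul, Matrix.mul_one, hUstar, dephaseS_sub, dephaseS_one,
        hQdef]
    rw [h]
    exact dephaseS_posSemidef (hP1.conjTranspose_mul_mul_same U)
  have hb3 : 2 * |((Q * χ).trace).re| ≤ traceNorm χ :=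
    trace_mul_le_traceNorm hχH hχtr hQps hQ1
  -- reality
  have ha1 : ‖(P * X1).trace‖ = |((P * X1).trace).re| :=
    herm_trace_abs hP.1 hX1H
  have ha2 : ‖(P * X2).trace‖ = |((P * X2).trace).re| :=
    herm_trace_abs hP.1 hX2H
  have ha3 : ‖(Q * χ).trace‖ = |((Q * χ).trace).re| :=
    herm_trace_abs hQps.1 hχH
  -- triangle inequality
  have htri : ‖(P * (U * (ρSE - dephaseS ρSE) * Uᴴ)).trace‖
      ≤ ‖(P * X1).trace‖ + ‖(P * X2).trace‖
        + ‖(Q * χ).trace‖ := by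
    rw [hsplit, hT3, sub_eq_add_neg]
    calc ‖(P * X1).trace + (P * X2).trace + -(Q * χ).trace‖
        ≤ ‖(P * X1).trace + (P * X2).trace‖ + ‖-(Q * χ).trace‖ :=
          norm_add_le _ _
      _ ≤ ‖(P * X1).trace‖ + ‖(P * X2).trace‖
            + ‖-(Q * χ).trace‖ :=
          add_le_add_left (norm_add_le _ _) _
      _ = _ := by rw [norm_neg]
  rw [ge_iff_le, sub_le_iff_le_add]
  have h2 : 2 * ‖(P * (U * (ρSE - dephaseS ρSE) * Uᴴ)).trace‖
      ≤ traceNorm A + 2 * traceNorm χ := by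
    rw [ha1, ha2, ha3] at htri
    linarith
  linarith
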